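/- arXiv:1910.12139 — 2 statements merged into one kernel-verified Lean document; each statement's English description precedes it below -/
import Mathlib

section
/- Let G be a connected unicyclic finite simple graph on n vertices (i.e., G is connected with exactly n edges). Then EE(G) > e^{2} + (n − 3). -/
/-!
Testing the adjacency matrix on the all-ones vector gives `λ₁ ≥ 2|E|/n = 2`. Since the eigenvalues
sum to zero, `EE(G) - n = Σ (e^{λ_i} - 1 - λ_i)`, a sum of nonnegative terms; the `λ₁` term is at
least `e² - 3`, and since `λ₁ > 0` some other eigenvalue is nonzero and contributes a positive term.
-/

open Finset Real

namespace EstradaIndexPaper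

/-- The adjacency matrix of a simple graph over `ℝ` is Hermitian. -/
theorem adjMatrix_isHermitian {n : ℕ} (G : SimpleGraph (Fin n)) [DecidableRel G.Adj] :
    (G.adjMatrix ℝ).IsHermitian := by
  unfold Matrix.IsHermitian
  rw [Matrix.conjTranspose_eq_transpose_of_trivial]
  exact G.isSymm_adjMatrix

/-- The eigenvalues of the adjacency matrix of `G`. -/
noncomputable def eig {n : ℕ} (G : SimpleGraph (Fin n)) [DecidableRel G.Adj] : Fin n → ℝ :=
  (adjMatrix_isHermitian G).eigenvalues

/-- The Estrada index of `G`: the sum of `e^{λ_i}` over the adjacency eigenvalues. -/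
noncomputable def EE {n : ℕ} (G : SimpleGraph (Fin n)) [DecidableRel G.Adj] : ℝ :=
  ∑ i, Real.exp (eig G i)

/-- The largest adjacency eigenvalue `λ₁` of `G`. -/
noncomputable def lam1 {n : ℕ} (G : SimpleGraph (Fin n)) [DecidableRel G.Adj] : ℝ :=
  ⨆ i, eig G i

/-- The Randić index `R(G) = Σ_{ij ∈ E(G)} (d(i)d(j))^{-1/2}`. -/
noncomputable def randic {n : ℕ} (G : SimpleGraph (Fin n)) [DecidableRel G.Adj] : ℝ :=
  ∑ e ∈ G.edgeFinset,
    Sym2.lift ⟨fun i j => (Real.sqrt ((G.degree i : ℝ) * (G.degree j : ℝ)))⁻¹,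
      fun i j => by simp [mul_comm]⟩ e

/-- The general Randić index `R_{1/2}(G) = Σ_{ij ∈ E(G)} (d(i)d(j))^{1/2}`. -/
noncomputable def randicHalf {n : ℕ} (G : SimpleGraph (Fin n)) [DecidableRel G.Adj] : ℝ :=
  ∑ e ∈ G.edgeFinset,
    Sym2.lift ⟨fun i j => Real.sqrt ((G.degree i : ℝ) * (G.degree j : ℝ)),
      fun i j => by simp [mul_comm]⟩ e

open Matrix
open scoped ComplexOrder

/-- Rayleigh bound: `c • 1 - A` is positive semidefinite once `c` dominates the spectrum. -/
theorem _root_.Matrix.IsHermitian.re_dotProduct_mulVec_le {𝕜 : Type*} [RCLike 𝕜] {m : Type*}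
    [Fintype m] [DecidableEq m] {A : Matrix m m 𝕜} (hA : A.IsHermitian) {c : ℝ}
    (hc : ∀ i, hA.eigenvalues i ≤ c) (x : m → 𝕜) :
    RCLike.re (star x ⬝ᵥ (A *ᵥ x)) ≤ c * RCLike.re (star x ⬝ᵥ x) := by
  have hB : (algebraMap 𝕜 (Matrix m m 𝕜) c - A).PosSemidef := by
    rw [posSemidef_iff_isHermitian_and_spectrum_nonneg]
    refine ⟨IsSelfAdjoint.sub (.algebraMap _ (RCLike.conj_ofReal c)) hA, ?_⟩
    rw [← spectrum.singleton_sub_eq, hA.spectrum_eq_image_range]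
    rintro _ ⟨_, rfl, _, ⟨_, ⟨i, rfl⟩, rfl⟩, rfl⟩
    exact sub_nonneg.2 (RCLike.ofReal_le_ofReal.2 (hc i))
  have := hB.re_dotProduct_nonneg x
  rwa [sub_mulVec, dotProduct_sub, map_sub, sub_nonneg, Algebra.algebraMap_eq_smul_one,
    smul_mulVec, one_mulVec, dotProduct_smul, smul_eq_mul, RCLike.re_ofReal_mul] at this

theorem _root_.Real.exp_sub_self_le_exp_sub_self {a b : ℝ} (ha : 0 ≤ a) (hab : a ≤ b) :
    exp a - a ≤ exp b - b := by
  have h₁ : exp a * (b - a + 1) ≤ exp b := by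
    rw [← sub_add_cancel b a, exp_add, mul_comm, add_sub_cancel_right]
    exact mul_le_mul_of_nonneg_right (add_one_le_exp _) (exp_pos a).le
  nlinarith [one_le_exp ha]

theorem _root_.Real.exp_add_card_sub_lt_sum_exp {ι : Type*} [Fintype ι] {f : ι → ℝ}
    (hf : ∑ i, f i = 0) {i₀ : ι} {a : ℝ} (ha : 0 < a) (hi₀ : a ≤ f i₀) :
    exp a + (Fintype.card ι - 1 - a) < ∑ i, exp (f i) := by
  obtain ⟨j, hji₀, hj⟩ : ∃ j, j ≠ i₀ ∧ f j ≠ 0 := by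
    by_contra! h
    rw [Finset.sum_eq_single i₀ (fun j _ hj => h j hj) (by simp)] at hf
    linarith
  set g : ℝ → ℝ := fun x => exp x - (x + 1)
  have hg : ∀ x, 0 ≤ g x := fun x => sub_nonneg.2 (add_one_le_exp x)
  have hexp : ∑ i, exp (f i) = Fintype.card ι + ∑ i, g (f i) := by
    simp only [g, Finset.sum_sub_distrib, Finset.sum_add_distrib, hf, Finset.sum_const,
      Finset.card_univ, nsmul_eq_mul, mul_one]
    ring
  have hpair : g (f i₀) + g (f j) ≤ ∑ i, g (f i) :=
    Finset.add_le_sum (fun i _ => hg (f i)) (mem_univ _) (mem_univ _) hji₀.symm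
  have hi₀' : exp a - a ≤ exp (f i₀) - f i₀ := exp_sub_self_le_exp_sub_self ha.le hi₀
  have hj' : 0 < g (f j) := sub_pos.2 (add_one_lt_exp hj)
  simp only [g] at hpair hj'
  linarith

theorem sum_eig_eq_zero {n : ℕ} (G : SimpleGraph (Fin n)) [DecidableRel G.Adj] :
    ∑ i, eig G i = 0 := by
  have := (adjMatrix_isHermitian G).trace_eq_sum_eigenvalues
  rw [SimpleGraph.trace_adjMatrix] at this
  exact_mod_cast this.symm

theorem two_mul_card_edgeFinset_le {n : ℕ} (G : SimpleGraph (Fin n)) [DecidableRel G.Adj]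
    {c : ℝ} (hc : ∀ i, eig G i ≤ c) : 2 * (#G.edgeFinset : ℝ) ≤ c * n := by
  have := (adjMatrix_isHermitian G).re_dotProduct_mulVec_le hc (Function.const _ 1)
  simp only [star_trivial, RCLike.re_to_real, dotProduct, SimpleGraph.adjMatrix_mulVec_const_apply,
    Function.const_apply, mul_one, one_mul, Finset.sum_const, card_univ, Fintype.card_fin,
    nsmul_eq_mul] at this
  rwa [← Nat.cast_sum, G.sum_degrees_eq_twice_card_edges, Nat.cast_mul, Nat.cast_ofNat] at this

theorem stmt6 {n : ℕ} (G : SimpleGraph (Fin n)) [DecidableRel G.Adj]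
    (hG : G.Connected) (huni : G.edgeFinset.card = n) :
    EE G > Real.exp 2 + ((n : ℝ) - 3) := by
  have : Nonempty (Fin n) := hG.nonempty
  have hn : (0 : ℝ) < n := by exact_mod_cast Fin.pos_iff_nonempty.2 this
  obtain ⟨i₀, hi₀⟩ := Finite.exists_max (eig G)
  have hmax : 2 ≤ eig G i₀ := by
    have := two_mul_card_edgeFinset_le G hi₀
    rw [huni] at this
    nlinarith
  have := exp_add_card_sub_lt_sum_exp (sum_eig_eq_zero G) two_pos hmax
  rw [Fintype.card_fin] at this
  rw [EE]
  linarith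

end EstradaIndexPaper
end

section
/- Let G be a connected unicyclic bipartite finite simple graph on n vertices (i.e., G is connected and bipartite with exactly n edges). Then EE(G) ≥ 2cosh(2) + (n − 2), with equality if and only if G is the cycle C_4 on 4 vertices. -/
/-!
Summing `exp x ≥ 1 + x + x²/2 + x³/6 + x⁴/24 + x⁵/120` (true for all real `x`, the degree being
odd) over the adjacency eigenvalues bounds `EE(G)` below by traces of powers of the adjacency
matrix `A`. For a bipartite graph with `n` edges, `tr A = tr A³ = tr A⁵ = 0`, `tr A² = 2n` and
`tr A⁴ ≥ ∑ dᵥ² ≥ ∑ (4dᵥ - 4) = 4n`, so `EE(G) ≥ 13n/6 > 2 cosh 2 + n - 2` once `n ≥ 5`.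
A bipartite graph has at most `n²/4` edges, so `n ≥ 4`; for `n = 4` the graph is complete
bipartite with classes of size two, i.e. `C₄`, whose adjacency matrix satisfies `A³ = 4A`. Its
eigenvalues therefore lie in `{0, ±2}`, where `exp` agrees with a quadratic, and
`EE(C₄) = 2 cosh 2 + 2` follows from `tr A = 0` and `tr A² = 8`.
-/

open Finset Real

theorem Matrix.IsHermitian.trace_pow_eq_sum_eigenvalues_pow {ι 𝕜 : Type*} [Fintype ι]
    [DecidableEq ι] [RCLike 𝕜] {A : Matrix ι ι 𝕜} (hA : A.IsHermitian) (k : ℕ) :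
    (A ^ k).trace = ∑ i, (hA.eigenvalues i : 𝕜) ^ k := by
  conv_lhs => rw [hA.spectral_theorem, ← map_pow, Matrix.diagonal_pow,
    Unitary.conjStarAlgAut_apply, Matrix.trace_mul_cycle, Unitary.coe_star_mul_self, one_mul,
    Matrix.trace_diagonal]
  simp

theorem Matrix.IsHermitian.eigenvalues_pow_three_eq {ι : Type*} [Fintype ι] [DecidableEq ι]
    {A : Matrix ι ι ℝ} (hA : A.IsHermitian) {a : ℝ} (h : A ^ 3 = a • A) (i : ι) :
    hA.eigenvalues i ^ 3 = a * hA.eigenvalues i := by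
  have : Nonempty ι := ⟨i⟩
  have hmem := spectrum.subset_polynomial_aeval A (Polynomial.X ^ 3 - a • Polynomial.X)
    ⟨_, hA.eigenvalues_mem_spectrum_real i, rfl⟩
  rw [map_sub, map_smul, map_pow, Polynomial.aeval_X, h, sub_self, spectrum.zero_eq] at hmem
  simpa [sub_eq_zero] using hmem

namespace Real

theorem quintic_le_exp (x : ℝ) : 1 + x + x^2/2 + x^3/6 + x^4/24 + x^5/120 ≤ exp x := by
  rcases le_total 0 x with hx | hx
  · simpa [Finset.sum_range_succ, Nat.factorial] using sum_le_exp_of_nonneg hx 6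
  -- `exp (-y) * T₅ y` has derivative `-exp (-y) * y ^ 5 / 120`, hence increases up to `0`.
  set ψ : ℝ → ℝ := fun y => exp (-y) * (1 + y + y^2/2 + y^3/6 + y^4/24 + y^5/120)
  have hψ : ∀ y, HasDerivAt ψ (-(exp (-y) * y ^ 5 / 120)) y := fun y => by
    have hT : HasDerivAt (fun y : ℝ => 1 + y + y^2/2 + y^3/6 + y^4/24 + y^5/120)
        (1 + y + y^2/2 + y^3/6 + y^4/24) y :=
      ((((((hasDerivAt_id' y).const_add 1).fun_add ((hasDerivAt_pow 2 y).div_const 2)).fun_add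
        ((hasDerivAt_pow 3 y).div_const 6)).fun_add ((hasDerivAt_pow 4 y).div_const 24)).fun_add
        ((hasDerivAt_pow 5 y).div_const 120)).congr_deriv (by norm_num; ring)
    exact ((hasDerivAt_neg y).exp.fun_mul hT).congr_deriv (by ring)
  have hmono : MonotoneOn ψ (Set.Iic 0) :=
    monotoneOn_of_deriv_nonneg (convex_Iic 0) (fun y _ => (hψ y).continuousAt.continuousWithinAt)
      (fun y _ => (hψ y).differentiableAt.differentiableWithinAt) fun y hy => by
        rw [interior_Iic, Set.mem_Iio] at hy
        rw [(hψ y).deriv]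
        have : y ^ 5 < 0 := Odd.pow_neg (by decide) hy
        have := exp_pos (-y)
        nlinarith
  have h := hmono hx Set.self_mem_Iic hx
  simp only [ψ, neg_zero, exp_zero] at h
  rw [exp_neg] at h
  have := exp_pos x
  field_simp at h
  linarith

-- The quadratic interpolating `exp` at `0` and `±2`.
theorem exp_eq_of_pow_three_eq {x : ℝ} (h : x ^ 3 = 4 * x) :
    exp x = 1 + sinh 2 / 2 * x + (cosh 2 - 1) / 4 * x ^ 2 := by
  have : x * (x - 2) * (x + 2) = 0 := by linear_combination h
  rcases mul_eq_zero.1 this with h | h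
  · rcases mul_eq_zero.1 h with rfl | h
    · simp
    · obtain rfl : x = 2 := by linarith
      linarith [cosh_add_sinh 2]
  · obtain rfl : x = -2 := by linarith
    linarith [cosh_sub_sinh 2]

theorem cosh_two_lt : cosh 2 < 39 / 10 := by
  have hup : exp 2 < 7.4 := by
    rw [show (2 : ℝ) = 1 + 1 by norm_num, exp_add]
    nlinarith [exp_one_lt_d9, exp_pos 1]
  have hinv : exp (-2) ≤ 1 / 5 := by
    rw [exp_neg]
    exact inv_le_of_inv_le₀ (by norm_num)
      (by linarith [quadratic_le_exp_of_nonneg (x := 2) (by norm_num)])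
  rw [cosh_eq]
  linarith

end Real

namespace SimpleGraph

section

variable {V : Type*} [Fintype V] (G : SimpleGraph V) [DecidableRel G.Adj]

theorem four_mul_card_edgeFinset_le_sq (hG : G.Colorable 2) :
    4 * #G.edgeFinset ≤ Fintype.card V ^ 2 := by
  have h := IsBipartite.four_mul_encard_edgeSet_le hG
  rw [← coe_edgeFinset, Set.encard_coe_eq_coe_finsetCard, ENat.card_eq_coe_fintype_card] at h
  exact_mod_cast h

theorem Coloring.neighborFinset_subset {α : Type*} [DecidableEq α] (c : G.Coloring α) (v : V) :
    G.neighborFinset v ⊆ ({w | c w ≠ c v} : Finset V) := fun w hw => by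
  simpa [ne_comm] using c.valid ((G.mem_neighborFinset v w).1 hw)

theorem Coloring.adj_iff_ne_of_sum_card_le {α : Type*} [DecidableEq α] (c : G.Coloring α)
    (h : ∑ v, #({w | c w ≠ c v} : Finset V) ≤ ∑ v, G.degree v) (v w : V) :
    G.Adj v w ↔ c v ≠ c w := by
  have hle : ∀ v ∈ univ, G.degree v ≤ #{w | c w ≠ c v} := fun v _ => by
    rw [← card_neighborFinset_eq_degree]
    exact card_le_card (c.neighborFinset_subset G v)
  have heq := (sum_eq_sum_iff_of_le hle).1 (le_antisymm (sum_le_sum hle) h) v (mem_univ v)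
  have hnbr : G.neighborFinset v = ({w | c w ≠ c v} : Finset V) :=
    eq_of_subset_of_card_le (c.neighborFinset_subset G v)
      (by rw [card_neighborFinset_eq_degree, heq])
  rw [← mem_neighborFinset, hnbr, mem_filter]
  simp [ne_comm]

variable [DecidableEq V]

theorem trace_adjMatrix_pow_of_odd {R : Type*} [Semiring R] (hG : G.Colorable 2) {k : ℕ}
    (hk : Odd k) : ((G.adjMatrix R) ^ k).trace = 0 := by
  obtain ⟨c⟩ := hG
  have hc := G.recolorOfEquiv finTwoEquiv c
  refine sum_eq_zero fun v _ => ?_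
  have : IsEmpty {p : G.Walk v v | p.length = k} :=
    ⟨fun p => by simpa using (hc.odd_length_iff_not_congr p.1).1 (p.2.symm ▸ hk)⟩
  rw [Matrix.diag_apply, adjMatrix_pow_apply_eq_card_walk, Fintype.card_eq_zero, Nat.cast_zero]

theorem trace_adjMatrix_sq {R : Type*} [Semiring R] :
    ((G.adjMatrix R) ^ 2).trace = 2 * #G.edgeFinset := by
  simp only [Matrix.trace, Matrix.diag_apply, sq, adjMatrix_mul_self_apply_self]
  rw [← Nat.cast_sum, sum_degrees_eq_twice_card_edges]
  push_cast
  rfl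

theorem sum_degree_sq_le_trace_adjMatrix_pow_four :
    ∑ v, (G.degree v : ℝ) ^ 2 ≤ ((G.adjMatrix ℝ) ^ 4).trace := by
  set B := G.adjMatrix ℝ ^ 2
  have hB : G.adjMatrix ℝ ^ 4 = B * B := by rw [← pow_add]
  have hsymm : B.IsSymm := G.isSymm_adjMatrix.pow 2
  rw [hB]
  refine sum_le_sum fun v _ => ?_
  have hdiag : B v v = G.degree v := by
    simp only [B, sq]
    exact adjMatrix_mul_self_apply_self G v
  calc (G.degree v : ℝ) ^ 2 = B v v * B v v := by rw [hdiag, sq]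
    _ ≤ ∑ w, B v w * B w v := by
        refine single_le_sum (f := fun w => B v w * B w v) (fun w _ => ?_) (mem_univ v)
        rw [hsymm.apply v w]
        exact mul_self_nonneg _
    _ = (B * B).diag v := rfl

end

theorem adjMatrix_cycleGraph_four_pow_three :
    (cycleGraph 4).adjMatrix ℝ ^ 3 = (4 : ℝ) • (cycleGraph 4).adjMatrix ℝ := by
  ext i j
  fin_cases i <;> fin_cases j <;>
    simp +decide [pow_succ, Matrix.mul_apply, Fin.sum_univ_four, adjMatrix_apply] <;> norm_num

theorem adjMatrix_pow_three_of_iso_cycleGraph_four {G : SimpleGraph (Fin 4)} [DecidableRel G.Adj]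
    (e : G ≃g cycleGraph 4) : G.adjMatrix ℝ ^ 3 = (4 : ℝ) • G.adjMatrix ℝ := by
  apply (Matrix.reindexAlgEquiv ℝ ℝ (e : Fin 4 ≃ Fin 4)).injective
  rw [map_pow, map_smul, Matrix.coe_reindexAlgEquiv, e.reindex_adjMatrix ℝ,
    adjMatrix_cycleGraph_four_pow_three]

-- The sum is `2ab` for colour classes of sizes `a + b = 4`; it reaches `8` only for `a = b = 2`,
-- where `c u ≠ c v` describes `K₂,₂ ≅ C₄`.
theorem exists_equiv_cycleGraph_four_of_coloring : ∀ c : Fin 4 → Fin 2,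
    ∑ v, #{w | c w ≠ c v} ≤ 8 ∧ (8 ≤ ∑ v, #{w | c w ≠ c v} →
      ∃ e : Fin 4 ≃ Fin 4, ∀ u v, c u ≠ c v ↔ (cycleGraph 4).Adj (e u) (e v)) := by
  decide

theorem nonempty_iso_cycleGraph_four (G : SimpleGraph (Fin 4)) [DecidableRel G.Adj]
    (hG : G.Colorable 2) (hE : #G.edgeFinset = 4) : Nonempty (G ≃g cycleGraph 4) := by
  obtain ⟨c⟩ := hG
  have hdeg : ∑ v, G.degree v = 8 := by rw [G.sum_degrees_eq_twice_card_edges, hE]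
  obtain ⟨hle, hiso⟩ := exists_equiv_cycleGraph_four_of_coloring c
  have hadj := c.adj_iff_ne_of_sum_card_le G (hdeg ▸ hle)
  obtain ⟨e, he⟩ := hiso <| hdeg ▸ sum_le_sum fun v _ => by
    rw [← G.card_neighborFinset_eq_degree]
    exact card_le_card (c.neighborFinset_subset G v)
  exact ⟨⟨e, fun {u v} => ((hadj u v).trans (he u v)).symm⟩⟩

end SimpleGraph

namespace EstradaIndexPaper

section

variable {n : ℕ} (G : SimpleGraph (Fin n)) [DecidableRel G.Adj]

theorem sum_eig_pow (k : ℕ) : ∑ i, eig G i ^ k = ((G.adjMatrix ℝ) ^ k).trace :=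
  ((adjMatrix_isHermitian G).trace_pow_eq_sum_eigenvalues_pow k).symm

theorem sum_eig : ∑ i, eig G i = 0 := by
  simpa using sum_eig_pow G 1

theorem sum_eig_sq : ∑ i, eig G i ^ 2 = 2 * #G.edgeFinset := by
  rw [sum_eig_pow, G.trace_adjMatrix_sq]

theorem sum_eig_pow_of_odd (hG : G.Colorable 2) {k : ℕ} (hk : Odd k) : ∑ i, eig G i ^ k = 0 := by
  rw [sum_eig_pow, G.trace_adjMatrix_pow_of_odd hG hk]

theorem EE_ge_of_colorable_two (hG : G.Colorable 2) :
    n + #G.edgeFinset + (∑ v, (G.degree v : ℝ) ^ 2) / 24 ≤ EE G := by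
  have h4 : ∑ v, (G.degree v : ℝ) ^ 2 ≤ ∑ i, eig G i ^ 4 := by
    rw [sum_eig_pow]
    exact G.sum_degree_sq_le_trace_adjMatrix_pow_four
  calc _ ≤ ∑ i, (1 + eig G i + eig G i ^ 2 / 2 + eig G i ^ 3 / 6 + eig G i ^ 4 / 24
        + eig G i ^ 5 / 120) := by
        simp only [sum_add_distrib, ← sum_div, sum_const, card_univ, Fintype.card_fin,
          nsmul_eq_mul, mul_one, sum_eig, sum_eig_sq, sum_eig_pow_of_odd G hG (k := 3) (by decide),
          sum_eig_pow_of_odd G hG (k := 5) (by decide)]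
        linarith
    _ ≤ EE G := sum_le_sum fun i _ => quintic_le_exp (eig G i)

theorem EE_ge_of_card_edgeFinset_eq (hG : G.Colorable 2) (hE : #G.edgeFinset = n) :
    13 * n / 6 ≤ EE G := by
  have hdeg : ∑ v, (G.degree v : ℝ) = 2 * n := by
    rw [← Nat.cast_sum, G.sum_degrees_eq_twice_card_edges, hE]
    push_cast
    rfl
  have hsq : ∑ v, (4 * (G.degree v : ℝ) - 4) ≤ ∑ v, (G.degree v : ℝ) ^ 2 :=
    sum_le_sum fun v _ => by nlinarith [sq_nonneg ((G.degree v : ℝ) - 2)]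
  rw [sum_sub_distrib, ← mul_sum, hdeg, sum_const, card_univ, Fintype.card_fin,
    nsmul_eq_mul] at hsq
  have hEE := EE_ge_of_colorable_two G hG
  rw [hE] at hEE
  linarith

theorem EE_eq_of_adjMatrix_pow_three (h : G.adjMatrix ℝ ^ 3 = (4 : ℝ) • G.adjMatrix ℝ) :
    EE G = n + (cosh 2 - 1) / 2 * #G.edgeFinset := by
  have hexp : ∀ i, exp (eig G i) = 1 + sinh 2 / 2 * eig G i + (cosh 2 - 1) / 4 * eig G i ^ 2 :=
    fun i => exp_eq_of_pow_three_eq ((adjMatrix_isHermitian G).eigenvalues_pow_three_eq h i)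
  simp only [EE, hexp, sum_add_distrib, ← mul_sum, sum_const, card_univ, Fintype.card_fin,
    nsmul_eq_mul, mul_one]
  rw [sum_eig, sum_eig_sq]
  ring

end

theorem stmt14 {n : ℕ} (G : SimpleGraph (Fin n)) [DecidableRel G.Adj]
    (hG : G.Connected) (hbip : G.Colorable 2) (huni : G.edgeFinset.card = n) :
    EE G ≥ 2 * Real.cosh 2 + ((n : ℝ) - 2) ∧
    (EE G = 2 * Real.cosh 2 + ((n : ℝ) - 2) ↔
      Nonempty (G ≃g SimpleGraph.cycleGraph 4)) := by
  have hn : 4 ≤ n := by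
    have := G.four_mul_card_edgeFinset_le_sq hbip
    rw [huni, Fintype.card_fin] at this
    have : 0 < n := Fin.pos hG.nonempty.some
    nlinarith
  rcases hn.eq_or_lt with rfl | hn
  · obtain ⟨e⟩ := G.nonempty_iso_cycleGraph_four hbip huni
    have hEE := EE_eq_of_adjMatrix_pow_three G
      (SimpleGraph.adjMatrix_pow_three_of_iso_cycleGraph_four e)
    rw [huni] at hEE
    refine ⟨by rw [hEE]; linarith, fun _ => ⟨e⟩, fun _ => by rw [hEE]; ring⟩
  · have hlt : 2 * cosh 2 + ((n : ℝ) - 2) < EE G := by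
      have : (5 : ℝ) ≤ n := by exact_mod_cast hn
      linarith [cosh_two_lt, EE_ge_of_card_edgeFinset_eq G hbip huni]
    refine ⟨hlt.le, fun h => absurd h hlt.ne', fun ⟨e⟩ => ?_⟩
    have := Fintype.card_congr e.toEquiv
    simp only [Fintype.card_fin] at this
    omega

end EstradaIndexPaper
end
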